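/- arXiv:2302.06239 — 4 statements merged into one kernel-verified Lean document; each statement's English description precedes it below -/
import Mathlib

section
/- If A is an invertible real matrix whose symmetric part (A + Aᵀ)/2 is positive semidefinite, and C is any real matrix of compatible dimensions, then the Schur complement Cᵀ A⁻¹ C also has positive semidefinite symmetric part. -/
open Matrix

variable {R m n : Type*} [Fintype m] [Fintype n]

theorem dotProduct_transpose_mul_mul_mulVec [CommSemiring R] (B : Matrix n n R)
    (C : Matrix n m R) (x : m → R) :
    x ⬝ᵥ (Cᵀ * B * C) *ᵥ x = (C *ᵥ x) ⬝ᵥ B *ᵥ (C *ᵥ x) := by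
  rw [← mulVec_mulVec, ← mulVec_mulVec, dotProduct_mulVec, vecMul_transpose]

theorem dotProduct_inv_mulVec [CommRing R] [DecidableEq n] {A : Matrix n n R}
    (hA : IsUnit A.det) (v : n → R) :
    v ⬝ᵥ A⁻¹ *ᵥ v = (A⁻¹ *ᵥ v) ⬝ᵥ A *ᵥ (A⁻¹ *ᵥ v) := by
  rw [mulVec_mulVec, mul_nonsing_inv A hA, one_mulVec, dotProduct_comm]

/-- Over `ℝ` this says that the symmetric part `(A + Aᵀ) / 2` is positive semidefinite. -/
def QuadFormNonneg [CommSemiring R] [LE R] (A : Matrix n n R) : Prop :=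
  ∀ x : n → R, 0 ≤ x ⬝ᵥ A *ᵥ x

namespace QuadFormNonneg

theorem transpose_mul_mul [CommSemiring R] [LE R] {B : Matrix n n R} (hB : QuadFormNonneg B)
    (C : Matrix n m R) : QuadFormNonneg (Cᵀ * B * C) := fun x => by
  rw [dotProduct_transpose_mul_mul_mulVec]
  exact hB (C *ᵥ x)

theorem inv [CommRing R] [LE R] [DecidableEq n] {A : Matrix n n R} (hA : IsUnit A.det)
    (hpsd : QuadFormNonneg A) : QuadFormNonneg A⁻¹ := fun v => by
  rw [dotProduct_inv_mulVec hA]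
  exact hpsd (A⁻¹ *ᵥ v)

end QuadFormNonneg

theorem schur_complement_psd_symm_part
    (n m : ℕ) (A : Matrix (Fin n) (Fin n) ℝ) (C : Matrix (Fin n) (Fin m) ℝ)
    (hA : IsUnit A.det)
    (hpsd : ∀ x : Fin n → ℝ, 0 ≤ x ⬝ᵥ A.mulVec x) :
    ∀ x : Fin m → ℝ, 0 ≤ x ⬝ᵥ (Cᵀ * A⁻¹ * C).mulVec x :=
  (QuadFormNonneg.inv hA hpsd).transpose_mul_mul C
end

section
/- The implicit midpoint discretization of E ẋ = J x + B u with E symmetric and J skew-symmetric satisfies the exact discrete energy balance: H(xⁿ⁺¹) - H(xⁿ) = Δt · ⟨B u^{n+1/2}, (xⁿ⁺¹+xⁿ)/2⟩, where H(x) = ½ xᵀ E x. -/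
/-!
Take the dot product of the scheme with the midpoint `(x₁ + x₀) / 2`. Since `E` is symmetric,
the left side becomes the energy difference `½ x₁ᵀ E x₁ - ½ x₀ᵀ E x₀`; since `J` is
skew-symmetric, its quadratic form vanishes, leaving only the supply term `Bu`.
-/

open Matrix

section QuadraticForms

variable {ι R : Type*} [Fintype ι]

theorem dotProduct_mulVec_comm_of_transpose_eq [CommSemiring R] {A : Matrix ι ι R}
    (hA : Aᵀ = A) (x y : ι → R) : x ⬝ᵥ A *ᵥ y = y ⬝ᵥ A *ᵥ x := by
  rw [← dotProduct_transpose_mulVec, hA]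

theorem add_dotProduct_mulVec_sub_of_transpose_eq [CommRing R] {A : Matrix ι ι R}
    (hA : Aᵀ = A) (x y : ι → R) :
    (x + y) ⬝ᵥ A *ᵥ (x - y) = x ⬝ᵥ A *ᵥ x - y ⬝ᵥ A *ᵥ y := by
  rw [mulVec_sub, add_dotProduct, dotProduct_sub, dotProduct_sub,
    dotProduct_mulVec_comm_of_transpose_eq hA y x]
  abel

theorem dotProduct_mulVec_self_eq_zero_of_transpose_eq_neg [CommRing R] [IsAddTorsionFree R]
    {A : Matrix ι ι R} (hA : Aᵀ = -A) (x : ι → R) : x ⬝ᵥ A *ᵥ x = 0 := by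
  have h := dotProduct_transpose_mulVec A x x
  rw [hA, neg_mulVec, dotProduct_neg] at h
  exact neg_eq_self.mp h

end QuadraticForms

theorem implicit_midpoint_discrete_energy_balance_general
    (n m : ℕ) (E J : Matrix (Fin n) (Fin n) ℝ)
    (hE : Eᵀ = E) (hJ : Jᵀ = -J)
    (B : Matrix (Fin n) (Fin m) ℝ)
    (Δt : ℝ)
    (x₀ x₁ : Fin n → ℝ) (u : Fin m → ℝ)
    (h : E.mulVec (x₁ - x₀) =
      Δt • (J.mulVec ((1 / 2 : ℝ) • (x₁ + x₀)) + B.mulVec u)) :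
    (1 / 2 : ℝ) * (x₁ ⬝ᵥ E.mulVec x₁) - (1 / 2 : ℝ) * (x₀ ⬝ᵥ E.mulVec x₀) =
      Δt * (((1 / 2 : ℝ) • (x₁ + x₀)) ⬝ᵥ B.mulVec u) := by
  calc (1 / 2 : ℝ) * (x₁ ⬝ᵥ E *ᵥ x₁) - (1 / 2 : ℝ) * (x₀ ⬝ᵥ E *ᵥ x₀)
      = ((1 / 2 : ℝ) • (x₁ + x₀)) ⬝ᵥ E *ᵥ (x₁ - x₀) := by
        rw [smul_dotProduct, add_dotProduct_mulVec_sub_of_transpose_eq hE, smul_eq_mul]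
        ring
    _ = Δt * (((1 / 2 : ℝ) • (x₁ + x₀)) ⬝ᵥ B *ᵥ u) := by
        rw [h, dotProduct_smul, dotProduct_add,
          dotProduct_mulVec_self_eq_zero_of_transpose_eq_neg hJ, zero_add, smul_eq_mul]

theorem implicit_midpoint_discrete_energy_balance
    (n m : ℕ) (E J : Matrix (Fin n) (Fin n) ℝ)
    (hE : Eᵀ = E) (hJ : Jᵀ = -J)
    (B : Matrix (Fin n) (Fin m) ℝ)
    (Δt : ℝ) (hΔt : 0 < Δt)
    (x₀ x₁ : Fin n → ℝ) (u : Fin m → ℝ)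
    (h : E.mulVec (x₁ - x₀) =
      Δt • (J.mulVec ((1 / 2 : ℝ) • (x₁ + x₀)) + B.mulVec u)) :
    (1 / 2 : ℝ) * (x₁ ⬝ᵥ E.mulVec x₁) - (1 / 2 : ℝ) * (x₀ ⬝ᵥ E.mulVec x₀) =
      Δt * (((1 / 2 : ℝ) • (x₁ + x₀)) ⬝ᵥ B.mulVec u) :=
  implicit_midpoint_discrete_energy_balance_general n m E J hE hJ B Δt x₀ x₁ u h
end

section
/- Discrete power balance: suppose finite-dimensional spaces satisfy the subcomplex inclusion d V̄ ⊆ W̄ and d V ⊆ W, and discrete trajectories satisfy the strong conservation laws ∂ₜ ᾱ = (-1)^p d β̄ and ∂ₜ β = -d α. Then (-1)^{p(n-p)} ⟨α, ∂ₜ ᾱ⟩ + ⟨β̄, ∂ₜ β⟩ equals the sum over mesh cells of boundary terms (-1)^p ⟨tr β̄, tr α⟩_{∂T} via integration by parts. -/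
open Finset

lemma neg_one_pow_mul_self (k : ℕ) : (-1 : ℝ) ^ k * (-1) ^ k = 1 := by
  rw [← mul_pow, neg_one_mul, neg_neg, one_pow]

lemma neg_one_pow_eq_neg_pred {p : ℕ} (hp : 1 ≤ p) : (-1 : ℝ) ^ p = -(-1) ^ (p - 1) := by
  obtain ⟨k, rfl⟩ := Nat.exists_eq_add_of_le' hp
  rw [Nat.add_sub_cancel, pow_succ, mul_neg_one]

/-- Graded commutativity moves `∂ₜᾱ = ±dβ̄` to the left of `α`; integration by parts turns
`dβ̄ ∧ α` into the boundary term minus a multiple of `β̄ ∧ dα = -β̄ ∧ ∂ₜβ`, which cancels the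
second summand. -/
theorem cell_power_balance {X Y P Q : Type*}
    [AddCommGroup X] [Module ℝ X] [AddCommGroup Y] [Module ℝ Y]
    [AddCommGroup P] [Module ℝ P] [AddCommGroup Q] [Module ℝ Q]
    (dX : X →ₗ[ℝ] P) (dY : Y →ₗ[ℝ] Q) (w1 : Y →ₗ[ℝ] P →ₗ[ℝ] ℝ) (w3 : P →ₗ[ℝ] Y →ₗ[ℝ] ℝ)
    (w2 : X →ₗ[ℝ] Q →ₗ[ℝ] ℝ) (bd : X →ₗ[ℝ] Y →ₗ[ℝ] ℝ) {ε σ : ℝ} (hε : ε * ε = 1)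
    (hσ : σ * σ = 1) (hcomm : ∀ a ω, w1 a ω = ε * w3 ω a)
    (hibp : ∀ ω η, w3 (dX ω) η + σ * w2 ω (dY η) = bd ω η) (a : Y) (b : X) :
    ε * w1 a (-σ • dX b) + w2 b (-dY a) = -σ * bd b a := by
  rw [hcomm, ← hibp]
  simp only [map_smul, map_neg, LinearMap.smul_apply, smul_eq_mul]
  linear_combination (-σ * w3 (dX b) a) * hε + w2 b (dY a) * hσ

/-- Discrete power balance for the dual-field discretization.  `ι` indexes the
cells `T` of the mesh.  On each cell `i`:
* `Xp1 i` is the space of `(p-1)`-forms (where `bb` lives),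
* `Yq1 i` the space of `(q-1)`-forms (where `α` lives, `q - 1 = n - p`),
* `Pp i` the space of `p`-forms (where `abar` lives),
* `Qq i` the space of `q`-forms (where `β` lives);
`dX`, `dY` are the exterior derivatives, `w1 α ω = ∫_T α ∧ ω`,
`w3 ω α = ∫_T ω ∧ α`, `w2 bb η = ∫_T bb ∧ η`, `bd bb α = ∫_{∂T} tr bb ∧ tr α`;
`hcomm` is graded commutativity of the wedge of an `(n-p)`-form with a
`p`-form, and `hibp` is the integration by parts formula on each cell.
If the strong conservation laws `∂ₜabar = (-1)^p d bb` and `∂ₜβ = -d α` hold on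
every cell, then
`(-1)^{p(n-p)} ∫_M α ∧ ∂ₜabar + ∫_M bb ∧ ∂ₜβ = (-1)^p ∑_T ∫_{∂T} tr bb ∧ tr α`. -/
theorem discrete_power_balance
    (n p : ℕ) (hp : 1 ≤ p)
    (ι : Type*) [Fintype ι]
    (Xp1 Yq1 Pp Qq : ι → Type*)
    [∀ i, AddCommGroup (Xp1 i)] [∀ i, Module ℝ (Xp1 i)]
    [∀ i, AddCommGroup (Yq1 i)] [∀ i, Module ℝ (Yq1 i)]
    [∀ i, AddCommGroup (Pp i)] [∀ i, Module ℝ (Pp i)]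
    [∀ i, AddCommGroup (Qq i)] [∀ i, Module ℝ (Qq i)]
    (dX : ∀ i, Xp1 i →ₗ[ℝ] Pp i) (dY : ∀ i, Yq1 i →ₗ[ℝ] Qq i)
    (w1 : ∀ i, Yq1 i →ₗ[ℝ] Pp i →ₗ[ℝ] ℝ)
    (w3 : ∀ i, Pp i →ₗ[ℝ] Yq1 i →ₗ[ℝ] ℝ)
    (w2 : ∀ i, Xp1 i →ₗ[ℝ] Qq i →ₗ[ℝ] ℝ)
    (bd : ∀ i, Xp1 i →ₗ[ℝ] Yq1 i →ₗ[ℝ] ℝ)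
    (hcomm : ∀ i (a : Yq1 i) (ω : Pp i),
      w1 i a ω = ((-1 : ℝ) ^ (p * (n - p))) * w3 i ω a)
    (hibp : ∀ i (ω : Xp1 i) (η : Yq1 i),
      w3 i (dX i ω) η + ((-1 : ℝ) ^ (p - 1)) * w2 i ω (dY i η) = bd i ω η)
    (α : ∀ i, Yq1 i) (bb : ∀ i, Xp1 i) (dta : ∀ i, Pp i) (dtβ : ∀ i, Qq i)
    (hlaw1 : ∀ i, dta i = ((-1 : ℝ) ^ p) • dX i (bb i))
    (hlaw2 : ∀ i, dtβ i = -(dY i (α i))) :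
    ((-1 : ℝ) ^ (p * (n - p))) * (∑ i, w1 i (α i) (dta i)) +
        (∑ i, w2 i (bb i) (dtβ i)) =
      ((-1 : ℝ) ^ p) * ∑ i, bd i (bb i) (α i) := by
  rw [mul_sum, mul_sum, ← sum_add_distrib]
  refine sum_congr rfl fun i _ => ?_
  rw [hlaw1, hlaw2, neg_one_pow_eq_neg_pred hp]
  exact cell_power_balance (dX i) (dY i) (w1 i) (w3 i) (w2 i) (bd i)
    (neg_one_pow_mul_self _) (neg_one_pow_mul_self _) (hcomm i) (hibp i) (α i) (bb i)
end

section
/- Equivalence of hybrid and mixed solutions at the algebraic level: let M, J, G, B be matrices with J skew-symmetric. Suppose (x, λ) solves M ẋ = J x + G λ and Gᵀ x = g, while x̃ solves the reduced system obtained by restricting to the constraint set {x : Gᵀ x = g} with test functions in ker Gᵀ, i.e., Pᵀ M ẋ̃ = Pᵀ J x̃ for a matrix P whose columns span ker Gᵀ, with Gᵀ x̃ = g. If M is invertible on ker Gᵀ and G has full column rank, then x = x̃ and λ is uniquely determined. -/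
/-!
The difference `e = x - x̃` stays in `ker Gᵀ = range P` and satisfies the reduced equation
`Pᵀ (M ė - J e) = 0`, in which the multiplier term has disappeared because `Pᵀ G = 0`.
Testing it against `e` itself (legitimate since `e = P w`) gives `e ⬝ M ė = e ⬝ J e = 0`
by skew-symmetry, so the energy `e ⬝ M e` is constant, hence zero, and positive definiteness
forces `e = 0`. The multiplier is then unique because `G` is injective.
-/

open Matrix

section

variable {ι κ : Type*} [Fintype ι]

theorem HasDerivAt.dotProduct {f g : ℝ → ι → ℝ} {f' g' : ι → ℝ} {t : ℝ}
    (hf : HasDerivAt f f' t) (hg : HasDerivAt g g' t) :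
    HasDerivAt (fun s => f s ⬝ᵥ g s) (f' ⬝ᵥ g t + f t ⬝ᵥ g') t := by
  show HasDerivAt (fun s => ∑ i, f s i * g s i) (∑ i, f' i * g t i + ∑ i, f t i * g' i) t
  rw [← Finset.sum_add_distrib]
  exact HasDerivAt.fun_sum fun i _ => (hasDerivAt_pi.mp hf i).mul (hasDerivAt_pi.mp hg i)

theorem HasDerivAt.mulVec (A : Matrix κ ι ℝ) {u : ℝ → ι → ℝ} {u' : ι → ℝ} {t : ℝ}
    (hu : HasDerivAt u u' t) : HasDerivAt (fun s => A *ᵥ u s) (A *ᵥ u') t :=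
  hasDerivAt_pi.mpr fun k =>
    HasDerivAt.fun_sum fun i _ => (hasDerivAt_pi.mp hu i).const_mul (A k i)

theorem hasDerivAt_dotProduct_mulVec_self {M : Matrix ι ι ℝ} (hM : Mᵀ = M)
    {u : ℝ → ι → ℝ} {u' : ι → ℝ} {t : ℝ} (hu : HasDerivAt u u' t) :
    HasDerivAt (fun s => u s ⬝ᵥ M *ᵥ u s) (2 * (u t ⬝ᵥ M *ᵥ u')) t := by
  convert hu.dotProduct (hu.mulVec M) using 1
  rw [dotProduct_mulVec, ← mulVec_transpose, hM, dotProduct_comm]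
  ring

theorem eq_zero_of_dotProduct_mulVec_deriv_eq_zero {M : Matrix ι ι ℝ} (hM : Mᵀ = M)
    (hMpos : ∀ v : ι → ℝ, v ≠ 0 → 0 < v ⬝ᵥ M *ᵥ v) {u : ℝ → ι → ℝ} (hu : Differentiable ℝ u)
    (horth : ∀ t, u t ⬝ᵥ M *ᵥ deriv u t = 0) {t₀ : ℝ} (h₀ : u t₀ = 0) (t : ℝ) : u t = 0 := by
  have henergy : ∀ s, HasDerivAt (fun s => u s ⬝ᵥ M *ᵥ u s) 0 s := fun s => by
    simpa [horth s] using hasDerivAt_dotProduct_mulVec_self hM (hu s).hasDerivAt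
  have ht : u t ⬝ᵥ M *ᵥ u t = 0 := by
    rw [is_const_of_deriv_eq_zero (fun s => (henergy s).differentiableAt)
      (fun s => (henergy s).deriv) t t₀, h₀, zero_dotProduct]
  by_contra hne
  exact (hMpos _ hne).ne' ht

theorem dotProduct_mulVec_self_eq_zero_of_transpose_eq_neg_s18 {J : Matrix ι ι ℝ} (hJ : Jᵀ = -J)
    (v : ι → ℝ) : v ⬝ᵥ J *ᵥ v = 0 := by
  have h : v ⬝ᵥ J *ᵥ v = -(v ⬝ᵥ J *ᵥ v) := by
    conv_lhs => rw [dotProduct_mulVec, ← mulVec_transpose, hJ, dotProduct_comm]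
    rw [neg_mulVec, dotProduct_neg]
  linarith

variable [Fintype κ]

theorem mulVec_dotProduct_eq_transpose_mulVec (P : Matrix ι κ ℝ) (w : κ → ℝ) (a : ι → ℝ) :
    P *ᵥ w ⬝ᵥ a = Pᵀ *ᵥ a ⬝ᵥ w := by
  rw [dotProduct_comm, dotProduct_mulVec, mulVec_transpose]

theorem transpose_mulVec_mulVec_eq_zero {ρ : Type*} [Fintype ρ] {G : Matrix ι κ ℝ}
    {P : Matrix ι ρ ℝ} (hGP : ∀ w, Gᵀ *ᵥ (P *ᵥ w) = 0) (v : κ → ℝ) : Pᵀ *ᵥ (G *ᵥ v) = 0 :=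
  dotProduct_eq_zero _ fun w => by
    rw [← mulVec_dotProduct_eq_transpose_mulVec, dotProduct_comm,
      mulVec_dotProduct_eq_transpose_mulVec, hGP, zero_dotProduct]

end

/-- Equivalence of hybrid and mixed solutions at the algebraic level.
`M` is symmetric positive definite, `J` skew-symmetric, `G` has full column
rank, and the columns of `P` span `ker Gᵀ`.  `x` solves the constrained system
`M ẋ = J x + G λ`, `Gᵀ x = g`, while `x̃` solves the reduced system
`Pᵀ M ẋ̃ = Pᵀ J x̃`, `Gᵀ x̃ = g`, with the same initial condition.  Then
`x = x̃` and the multiplier `λ` is uniquely determined by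
`M ẋ - J x = G λ`. -/
theorem hybrid_mixed_equivalence
    (n m r : ℕ)
    (M J : Matrix (Fin n) (Fin n) ℝ)
    (hM : Mᵀ = M) (hMpos : ∀ v : Fin n → ℝ, v ≠ 0 → 0 < v ⬝ᵥ M.mulVec v)
    (hJ : Jᵀ = -J)
    (G : Matrix (Fin n) (Fin m) ℝ)
    (hG : ∀ w : Fin m → ℝ, G.mulVec w = 0 → w = 0)
    (P : Matrix (Fin n) (Fin r) ℝ)
    (hP : ∀ v : Fin n → ℝ, Gᵀ.mulVec v = 0 ↔ ∃ w : Fin r → ℝ, P.mulVec w = v)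
    (g : Fin m → ℝ)
    (x xt : ℝ → Fin n → ℝ) (lam : ℝ → Fin m → ℝ)
    (hx : Differentiable ℝ x) (hxt : Differentiable ℝ xt)
    (heq1 : ∀ t, M.mulVec (deriv x t) = J.mulVec (x t) + G.mulVec (lam t))
    (heq2 : ∀ t, Gᵀ.mulVec (x t) = g)
    (heq3 : ∀ t, (Pᵀ * M).mulVec (deriv xt t) = (Pᵀ * J).mulVec (xt t))
    (heq4 : ∀ t, Gᵀ.mulVec (xt t) = g)
    (hinit : x 0 = xt 0) :
    (∀ t, x t = xt t) ∧
      ∀ (t : ℝ) (μ : Fin m → ℝ),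
        M.mulVec (deriv x t) - J.mulVec (x t) = G.mulVec μ → μ = lam t := by
  have hPG := transpose_mulVec_mulVec_eq_zero (G := G) fun w => (hP _).mpr ⟨w, rfl⟩
  set e : ℝ → Fin n → ℝ := x - xt with he
  have hreduced : ∀ t, Pᵀ *ᵥ (M *ᵥ deriv e t) = Pᵀ *ᵥ (J *ᵥ e t) := fun t => by
    have hreduced_xt := heq3 t
    rw [← mulVec_mulVec, ← mulVec_mulVec] at hreduced_xt
    rw [he, deriv_sub (hx t) (hxt t), Pi.sub_apply, mulVec_sub, mulVec_sub, mulVec_sub,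
      mulVec_sub, heq1, mulVec_add, hPG, add_zero, hreduced_xt]
  have horth : ∀ t, e t ⬝ᵥ M *ᵥ deriv e t = 0 := fun t => by
    obtain ⟨w, hw⟩ := (hP (e t)).mp (by rw [he, Pi.sub_apply, mulVec_sub, heq2, heq4, sub_self])
    rw [← hw, mulVec_dotProduct_eq_transpose_mulVec, hreduced,
      ← mulVec_dotProduct_eq_transpose_mulVec, hw]
    exact dotProduct_mulVec_self_eq_zero_of_transpose_eq_neg_s18 hJ _
  have hxeq : ∀ t, x t = xt t := fun t => sub_eq_zero.mp <|
    eq_zero_of_dotProduct_mulVec_deriv_eq_zero hM hMpos (hx.sub hxt) horth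
      (sub_eq_zero.mpr hinit) t
  refine ⟨hxeq, fun t μ hμ => sub_eq_zero.mp (hG _ ?_)⟩
  rw [mulVec_sub, ← hμ, heq1, add_sub_cancel_left, sub_self]
end
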